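/- arXiv:2102.03816 — 2 statements merged into one kernel-verified Lean document; each statement's English description precedes it below -/
import Mathlib

section
/- Let v ∈ L^∞(ℝ) be nonnegative with v(x) ≤ C/x² for almost all x. Then the lowest Neumann eigenvalue λ₀(L) of -d²/dx² + v on (-L/2, L/2) satisfies λ₀(L) ≤ (4π² + 16C)/L² for all L > 0. -/
/-!
Test the Rayleigh quotient with `u x = x`: then `∫ u² = L³/12`, `∫ u'² = L`, and the decay
hypothesis says `v x * x² ≤ C` a.e., so `∫ v u² ≤ C L`. The quotient is thus at most
`12 (1 + C) / L²`, and `12 < 4π²`.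
-/

open Real Set intervalIntegral

open MeasureTheory (volume ae_restrict_of_ae)

def neumannRayleighQuotients (v : ℝ → ℝ) (a b : ℝ) : Set ℝ :=
  {r | ∃ u : ℝ → ℝ, ContDiffOn ℝ 1 u (Icc a b) ∧ (∫ x in a..b, u x ^ 2) ≠ 0 ∧
    r = (∫ x in a..b, (deriv u x ^ 2 + v x * u x ^ 2)) / ∫ x in a..b, u x ^ 2}

section

variable {v : ℝ → ℝ} {a b C : ℝ}

lemma bddBelow_neumannRayleighQuotients (hv : ∀ x, 0 ≤ v x) (hab : a ≤ b) :
    BddBelow (neumannRayleighQuotients v a b) := by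
  refine ⟨0, ?_⟩
  rintro r ⟨u, -, -, rfl⟩
  exact div_nonneg
    (integral_nonneg hab fun x _ => add_nonneg (sq_nonneg _) (mul_nonneg (hv x) (sq_nonneg _)))
    (integral_nonneg hab fun x _ => sq_nonneg _)

lemma id_mem_neumannRayleighQuotients (hab : a < b)
    (hv : IntervalIntegrable (fun x => v x * x ^ 2) volume a b) :
    (b - a + ∫ x in a..b, v x * x ^ 2) / ((b ^ 3 - a ^ 3) / 3) ∈
      neumannRayleighQuotients v a b := by
  have hden : (∫ x in a..b, x ^ 2) = (b ^ 3 - a ^ 3) / 3 := by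
    rw [integral_pow]; norm_num
  refine ⟨fun x => x, contDiffOn_id, ?_, ?_⟩
  · rw [hden]
    have : a ^ 3 < b ^ 3 := Odd.strictMono_pow (by decide) hab
    linarith
  · simp only [deriv_id'', one_pow]
    rw [hden, integral_add intervalIntegrable_const hv, integral_const, smul_eq_mul, mul_one]

lemma ae_abs_mul_sq_le (hdecay : ∀ᵐ x : ℝ, |v x| ≤ C / x ^ 2) :
    ∀ᵐ x : ℝ, |v x * x ^ 2| ≤ C := by
  have hne : ∀ᵐ x : ℝ, x ≠ 0 := by simp [MeasureTheory.ae_iff]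
  filter_upwards [hdecay, hne] with x hx hx0
  rw [abs_mul, abs_of_nonneg (sq_nonneg x), ← le_div_iff₀ (by positivity)]
  exact hx

lemma intervalIntegrable_mul_sq_of_ae_abs_le (hmeas : Measurable v)
    (hdecay : ∀ᵐ x : ℝ, |v x| ≤ C / x ^ 2) :
    IntervalIntegrable (fun x => v x * x ^ 2) volume a b :=
  intervalIntegrable_const.mono_fun'
    (hmeas.mul (measurable_id.pow_const 2)).aestronglyMeasurable
    (ae_restrict_of_ae (ae_abs_mul_sq_le hdecay))

lemma integral_mul_sq_le_of_ae_abs_le (hmeas : Measurable v)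
    (hdecay : ∀ᵐ x : ℝ, |v x| ≤ C / x ^ 2) (hab : a ≤ b) :
    (∫ x in a..b, v x * x ^ 2) ≤ C * (b - a) := by
  calc (∫ x in a..b, v x * x ^ 2) ≤ ∫ _ in a..b, C :=
        integral_mono_ae hab (intervalIntegrable_mul_sq_of_ae_abs_le hmeas hdecay)
          intervalIntegrable_const
          ((ae_abs_mul_sq_le hdecay).mono fun x hx => (le_abs_self _).trans hx)
    _ = C * (b - a) := by rw [integral_const, smul_eq_mul, mul_comm]

end

lemma add_div_cube_le_of_le_mul {L C J : ℝ} (hL : 0 < L) (hJ : 0 ≤ J) (hJC : J ≤ C * L) :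
    (L + J) / (L ^ 3 / 12) ≤ (4 * π ^ 2 + 16 * C) / L ^ 2 := by
  have hC : 0 ≤ C := nonneg_of_mul_nonneg_left (hJ.trans hJC) hL
  have hπ : 12 ≤ 4 * π ^ 2 := by nlinarith [pi_gt_three]
  rw [div_le_div_iff₀ (by positivity) (by positivity)]
  nlinarith [mul_le_mul_of_nonneg_right hJC (sq_nonneg L), pow_pos hL 3]

theorem stmt2_general (L C : ℝ) (hL : 0 < L) (v : ℝ → ℝ)
    (hmeas : Measurable v)
    (hpos : ∀ x, 0 ≤ v x)
    (hdecay : ∀ᵐ x : ℝ, |v x| ≤ C / x ^ 2) :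
    sInf {r : ℝ | ∃ u : ℝ → ℝ, ContDiffOn ℝ 1 u (Set.Icc (-(L/2)) (L/2)) ∧
        (∫ x in (-(L/2))..(L/2), u x ^ 2) ≠ 0 ∧
        r = (∫ x in (-(L/2))..(L/2), ((deriv u x) ^ 2 + v x * u x ^ 2)) /
            (∫ x in (-(L/2))..(L/2), u x ^ 2)} ≤ (4 * π ^ 2 + 16 * C) / L ^ 2 := by
  have hab : -(L / 2) < L / 2 := by linarith
  have hmem := id_mem_neumannRayleighQuotients hab
    (intervalIntegrable_mul_sq_of_ae_abs_le hmeas hdecay)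
  have hlen : L / 2 - -(L / 2) = L := by ring
  have hvol : ((L / 2) ^ 3 - (-(L / 2)) ^ 3) / 3 = L ^ 3 / 12 := by ring
  rw [hlen, hvol] at hmem
  refine (csInf_le (bddBelow_neumannRayleighQuotients hpos hab.le) hmem).trans
    (add_div_cube_le_of_le_mul hL ?_ ?_)
  · exact integral_nonneg hab.le fun x _ => mul_nonneg (hpos x) (sq_nonneg x)
  · simpa [hlen] using integral_mul_sq_le_of_ae_abs_le hmeas hdecay hab.le

theorem stmt2 (L C : ℝ) (hL : 0 < L) (hC : 0 < C) (v : ℝ → ℝ)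
    (hmeas : Measurable v) (hbdd : ∃ B : ℝ, ∀ x, v x ≤ B)
    (hpos : ∀ x, 0 ≤ v x)
    (hdecay : ∀ᵐ x : ℝ, |v x| ≤ C / x ^ 2) :
    sInf {r : ℝ | ∃ u : ℝ → ℝ, ContDiffOn ℝ 1 u (Set.Icc (-(L/2)) (L/2)) ∧
        (∫ x in (-(L/2))..(L/2), u x ^ 2) ≠ 0 ∧
        r = (∫ x in (-(L/2))..(L/2), ((deriv u x) ^ 2 + v x * u x ^ 2)) /
            (∫ x in (-(L/2))..(L/2), u x ^ 2)} ≤ (4 * π ^ 2 + 16 * C) / L ^ 2 :=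
  stmt2_general L C hL v hmeas hpos hdecay
end

section
/- Let v ∈ L^∞(ℝ) be nonnegative with |v(x)| ≤ C/x² a.e. Then the normalized positive Neumann ground state φ of -d²/dx² + v on I = (-L/2, L/2) satisfies sup_{x∈I} |φ(x)| ≤ (1 + √(4π² + 16C))/√L for all L > 0. -/
/-!
Testing the Rayleigh quotient with `u x = x` bounds the ground-state energy, hence `∫ φ'²`, by
`12 (1 + C) / L² ≤ K / L²` with `K = 4π² + 16C`, because `v x x² ≤ C`. Since `∫ φ² = 1`, some
point has `φ² ≤ 1 / L`, and from there `φ²` grows by at most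
`∫ |2 φ φ'| ≤ s ∫ φ² + s⁻¹ ∫ φ'² = 2 √K / L` for `s = √K / L`.
-/

open Real Set intervalIntegral MeasureTheory Filter Topology

section Interval

variable {a b : ℝ} {f : ℝ → ℝ}

theorem ContDiffOn.hasDerivAt_derivWithin_Icc (hf : ContDiffOn ℝ 1 f (Icc a b)) {t : ℝ}
    (ht : t ∈ Ioo a b) : HasDerivAt f (derivWithin f (Icc a b) t) t := by
  have hnhds : Icc a b ∈ 𝓝 t := Icc_mem_nhds ht.1 ht.2
  rw [derivWithin_of_mem_nhds hnhds]
  exact ((hf.differentiableOn one_ne_zero t (Ioo_subset_Icc_self ht)).differentiableAt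
    hnhds).hasDerivAt

theorem exists_mem_Icc_sq_mul_le_integral_sq (hab : a ≤ b) (hf : ContinuousOn f (Icc a b)) :
    ∃ y ∈ Icc a b, f y ^ 2 * (b - a) ≤ ∫ x in a..b, f x ^ 2 := by
  obtain ⟨y, hy, hmin⟩ := isCompact_Icc.exists_isMinOn (nonempty_Icc.2 hab) (hf.pow 2)
  refine ⟨y, hy, ?_⟩
  calc f y ^ 2 * (b - a) = ∫ _ in a..b, f y ^ 2 := by simp [mul_comm]
    _ ≤ ∫ x in a..b, f x ^ 2 :=
      integral_mono_on hab intervalIntegrable_const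
        ((hf.pow 2).intervalIntegrable_of_Icc hab) fun x hx => hmin hx

theorem abs_two_mul_le_mul_sq_add_inv_mul_sq {t : ℝ} (ht : 0 < t) (x y : ℝ) :
    |2 * x * y| ≤ t * x ^ 2 + t⁻¹ * y ^ 2 := by
  have hsq : 0 ≤ t⁻¹ * (t * |x| - |y|) ^ 2 := by positivity
  have hexpand : t⁻¹ * (t * |x| - |y|) ^ 2 = t * x ^ 2 - |2 * x * y| + t⁻¹ * y ^ 2 := by
    rw [abs_mul, abs_mul, abs_two, ← sq_abs x, ← sq_abs y]
    field_simp
    ring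
  linarith

theorem abs_sq_sub_sq_le_integral_abs (hab : a < b) (hf : ContDiffOn ℝ 1 f (Icc a b)) {x y : ℝ}
    (hx : x ∈ Icc a b) (hy : y ∈ Icc a b) :
    |f x ^ 2 - f y ^ 2| ≤ ∫ t in a..b, |2 * f t * derivWithin f (Icc a b) t| := by
  wlog hyx : y ≤ x generalizing x y
  · rw [abs_sub_comm]
    exact this hy hx (le_of_not_ge hyx)
  set g := derivWithin f (Icc a b)
  have hF : ContinuousOn (fun t => 2 * f t * g t) (Icc a b) :=
    (continuousOn_const.mul hf.continuousOn).mul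
      (hf.continuousOn_derivWithin (uniqueDiffOn_Icc hab) le_rfl)
  have hsub : Icc y x ⊆ Icc a b := Icc_subset_Icc hy.1 hx.2
  have hFTC : ∫ t in y..x, 2 * f t * g t = f x ^ 2 - f y ^ 2 := by
    refine integral_eq_sub_of_hasDerivAt_of_le hyx ((hf.continuousOn.pow 2).mono hsub)
      (fun t ht => ?_) ((hF.mono hsub).intervalIntegrable_of_Icc hyx)
    exact ((hf.hasDerivAt_derivWithin_Icc (Ioo_subset_Ioo hy.1 hx.2 ht)).pow 2).congr_deriv
      (by simp [g])
  calc |f x ^ 2 - f y ^ 2| = |∫ t in y..x, 2 * f t * g t| := by rw [hFTC]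
    _ ≤ ∫ t in y..x, |2 * f t * g t| := abs_integral_le_integral_abs hyx
    _ ≤ ∫ t in a..b, |2 * f t * g t| :=
      integral_mono_interval hy.1 hyx hx.2 (Eventually.of_forall fun _ => abs_nonneg _)
        (hF.abs.intervalIntegrable_of_Icc hab.le)

theorem sq_le_of_integral_sq_eq_one (hab : a < b) (hf : ContDiffOn ℝ 1 f (Icc a b))
    (hnorm : ∫ x in a..b, f x ^ 2 = 1) {s : ℝ} (hs : 0 < s)
    (hderiv : ∫ x in a..b, derivWithin f (Icc a b) x ^ 2 ≤ s ^ 2) {x : ℝ} (hx : x ∈ Icc a b) :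
    f x ^ 2 ≤ 1 / (b - a) + 2 * s := by
  set g := derivWithin f (Icc a b)
  have hg : ContinuousOn g (Icc a b) := hf.continuousOn_derivWithin (uniqueDiffOn_Icc hab) le_rfl
  have hf2 : IntervalIntegrable (fun t => f t ^ 2) volume a b :=
    (hf.continuousOn.pow 2).intervalIntegrable_of_Icc hab.le
  have hg2 : IntervalIntegrable (fun t => g t ^ 2) volume a b :=
    (hg.pow 2).intervalIntegrable_of_Icc hab.le
  have hosc : ∫ t in a..b, |2 * f t * g t| ≤ 2 * s := calc
    _ ≤ ∫ t in a..b, (s * f t ^ 2 + s⁻¹ * g t ^ 2) :=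
      integral_mono_on hab.le
        (((continuousOn_const.mul hf.continuousOn).mul hg).abs.intervalIntegrable_of_Icc hab.le)
        ((hf2.const_mul s).add (hg2.const_mul _))
        fun t _ => abs_two_mul_le_mul_sq_add_inv_mul_sq hs _ _
    _ = s + s⁻¹ * ∫ t in a..b, g t ^ 2 := by
      rw [integral_add (hf2.const_mul s) (hg2.const_mul _), intervalIntegral.integral_const_mul,
        intervalIntegral.integral_const_mul, hnorm, mul_one]
    _ ≤ s + s⁻¹ * s ^ 2 := by gcongr
    _ = 2 * s := by field_simp; ring
  obtain ⟨y, hy, hfy⟩ := exists_mem_Icc_sq_mul_le_integral_sq hab.le hf.continuousOn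
  have hfy' : f y ^ 2 ≤ 1 / (b - a) := by
    rw [le_div_iff₀ (sub_pos.2 hab)]
    linarith
  have := (le_abs_self _).trans (abs_sq_sub_sq_le_integral_abs hab hf hx hy)
  linarith

theorem intervalIntegrable_mul_of_abs_le {v h : ℝ → ℝ} {B : ℝ} (hab : a ≤ b)
    (hv : Measurable v) (hvB : ∀ x, |v x| ≤ B) (hh : ContinuousOn h (Icc a b)) :
    IntervalIntegrable (fun x => v x * h x) volume a b := by
  rw [intervalIntegrable_iff_integrableOn_Icc_of_le hab]
  exact (Measure.integrableOn_of_bounded measure_Icc_lt_top.ne hv.aestronglyMeasurable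
    (Eventually.of_forall hvB)).mul_continuousOn hh isCompact_Icc

theorem integral_derivWithin_sq_le_energy {v : ℝ → ℝ} {B : ℝ} (hab : a < b)
    (hf : ContDiffOn ℝ 1 f (Icc a b)) (hv : Measurable v) (hv0 : ∀ x, 0 ≤ v x)
    (hvB : ∀ x, v x ≤ B) :
    ∫ x in a..b, derivWithin f (Icc a b) x ^ 2 ≤ ∫ x in a..b, (deriv f x ^ 2 + v x * f x ^ 2) := by
  have hderiv : EqOn (fun x => derivWithin f (Icc a b) x ^ 2 + v x * f x ^ 2)
      (fun x => deriv f x ^ 2 + v x * f x ^ 2) (Ioo a b) := fun t ht => by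
    simp only [derivWithin_of_mem_nhds (Icc_mem_nhds ht.1 ht.2)]
  have hg2 : IntervalIntegrable (fun t => derivWithin f (Icc a b) t ^ 2) volume a b :=
    ((hf.continuousOn_derivWithin (uniqueDiffOn_Icc hab) le_rfl).pow 2).intervalIntegrable_of_Icc
      hab.le
  have hvf : IntervalIntegrable (fun x => v x * f x ^ 2) volume a b :=
    intervalIntegrable_mul_of_abs_le hab.le hv
      (fun x => (abs_of_nonneg (hv0 x)).trans_le (hvB x)) (hf.continuousOn.pow 2)
  rw [← integral_congr_Ioo_of_le hab.le hderiv, integral_add hg2 hvf]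
  exact le_add_of_nonneg_right (integral_nonneg hab.le fun x _ => mul_nonneg (hv0 x) (sq_nonneg _))

end Interval

def rayleighQuotients (v : ℝ → ℝ) (a b : ℝ) : Set ℝ :=
  {r | ∃ u : ℝ → ℝ, ContDiffOn ℝ 1 u (Icc a b) ∧ (∫ x in a..b, u x ^ 2) ≠ 0 ∧
    r = (∫ x in a..b, ((deriv u x) ^ 2 + v x * u x ^ 2)) / (∫ x in a..b, u x ^ 2)}

theorem bddBelow_rayleighQuotients {v : ℝ → ℝ} {a b : ℝ} (hab : a ≤ b) (hv0 : ∀ x, 0 ≤ v x) :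
    BddBelow (rayleighQuotients v a b) := by
  refine ⟨0, ?_⟩
  rintro r ⟨u, -, -, rfl⟩
  exact div_nonneg
    (integral_nonneg hab fun x _ => add_nonneg (sq_nonneg _) (mul_nonneg (hv0 x) (sq_nonneg _)))
    (integral_nonneg hab fun x _ => sq_nonneg _)

theorem sInf_rayleighQuotients_le {v : ℝ → ℝ} {C L : ℝ} (hL : 0 < L) (hv0 : ∀ x, 0 ≤ v x)
    (hdecay : ∀ᵐ x, v x * x ^ 2 ≤ C) :
    sInf (rayleighQuotients v (-(L/2)) (L/2)) ≤ 12 * (1 + C) / L ^ 2 := by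
  have hsq : ∫ x in (-(L/2))..(L/2), x ^ 2 = L ^ 3 / 12 := by
    rw [integral_pow]
    ring
  set N := ∫ x in (-(L/2))..(L/2), (deriv (fun x => x) x ^ 2 + v x * x ^ 2)
  have hN : N ≤ (1 + C) * L := by
    have hbound : ∀ᵐ x, x ∈ uIoc (-(L/2)) (L/2) →
        ‖deriv (fun x => x) x ^ 2 + v x * x ^ 2‖ ≤ 1 + C := by
      filter_upwards [hdecay] with x hx _
      rw [deriv_id'', one_pow, Real.norm_of_nonneg (by positivity [hv0 x])]
      linarith
    have := (le_abs_self _).trans (norm_integral_le_of_norm_le_const_ae hbound)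
    rwa [show |L / 2 - -(L / 2)| = L by rw [abs_of_pos (by linarith)]; ring] at this
  have hmem : N / (L ^ 3 / 12) ∈ rayleighQuotients v (-(L/2)) (L/2) :=
    ⟨fun x => x, contDiff_id.contDiffOn, by rw [hsq]; positivity, by rw [hsq]⟩
  calc sInf (rayleighQuotients v (-(L/2)) (L/2)) ≤ N / (L ^ 3 / 12) :=
        csInf_le (bddBelow_rayleighQuotients (by linarith) hv0) hmem
    _ ≤ (1 + C) * L / (L ^ 3 / 12) := by gcongr
    _ = 12 * (1 + C) / L ^ 2 := by field_simp

theorem mul_sq_le_of_abs_le_div_sq {c C x : ℝ} (hC : 0 ≤ C) (h : |c| ≤ C / x ^ 2) :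
    c * x ^ 2 ≤ C := by
  rcases eq_or_ne x 0 with rfl | hx
  · simpa using hC
  · calc c * x ^ 2 ≤ |c| * x ^ 2 := by gcongr; exact le_abs_self c
      _ ≤ C := by rwa [← le_div_iff₀ (by positivity)]

theorem inv_add_two_mul_sqrt_div_le_sq {K L : ℝ} (hL : 0 < L) (hK : 0 ≤ K) :
    1 / L + 2 * (√K / L) ≤ ((1 + √K) / √L) ^ 2 := by
  rw [div_pow, sq_sqrt hL.le, add_sq, sq_sqrt hK]
  have : 0 ≤ K / L := by positivity
  calc 1 / L + 2 * (√K / L) ≤ 1 / L + 2 * (√K / L) + K / L := by linarith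
    _ = _ := by ring

theorem stmt13_general (L C : ℝ) (hL : 0 < L) (hC : 0 < C) (v φ : ℝ → ℝ)
    (hmeas : Measurable v) (hbdd : ∃ B : ℝ, ∀ x, v x ≤ B)
    (hvpos : ∀ x, 0 ≤ v x)
    (hdecay : ∀ᵐ x : ℝ, |v x| ≤ C / x ^ 2)
    (hC1 : ContDiffOn ℝ 1 φ (Set.Icc (-(L/2)) (L/2)))
    (hnorm : (∫ x in (-(L/2))..(L/2), φ x ^ 2) = 1)
    (hmin : (∫ x in (-(L/2))..(L/2), ((deriv φ x) ^ 2 + v x * φ x ^ 2)) =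
      sInf {r : ℝ | ∃ u : ℝ → ℝ, ContDiffOn ℝ 1 u (Set.Icc (-(L/2)) (L/2)) ∧
        (∫ x in (-(L/2))..(L/2), u x ^ 2) ≠ 0 ∧
        r = (∫ x in (-(L/2))..(L/2), ((deriv u x) ^ 2 + v x * u x ^ 2)) /
            (∫ x in (-(L/2))..(L/2), u x ^ 2)}) :
    ∀ x ∈ Set.Ioo (-(L/2)) (L/2),
      |φ x| ≤ (1 + Real.sqrt (4 * π ^ 2 + 16 * C)) / Real.sqrt L := by
  intro x hx
  set K := 4 * π ^ 2 + 16 * C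
  have hab : -(L/2) < L/2 := by linarith
  have hK : 12 * (1 + C) ≤ K := by nlinarith [pi_gt_three]
  have hKpos : 0 < K := by positivity
  obtain ⟨B, hB⟩ := hbdd
  have hderiv : ∫ t in (-(L/2))..(L/2), derivWithin φ (Icc (-(L/2)) (L/2)) t ^ 2 ≤ (√K / L) ^ 2 :=
    calc _ ≤ ∫ t in (-(L/2))..(L/2), ((deriv φ t) ^ 2 + v t * φ t ^ 2) :=
          integral_derivWithin_sq_le_energy hab hC1 hmeas hvpos hB
      _ = sInf (rayleighQuotients v (-(L/2)) (L/2)) := hmin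
      _ ≤ 12 * (1 + C) / L ^ 2 := sInf_rayleighQuotients_le hL hvpos
          (hdecay.mono fun t ht => mul_sq_le_of_abs_le_div_sq hC.le ht)
      _ ≤ (√K / L) ^ 2 := by rw [div_pow, sq_sqrt hKpos.le]; gcongr
  refine abs_le_of_sq_le_sq ?_ (by positivity)
  calc φ x ^ 2 ≤ 1 / (L/2 - -(L/2)) + 2 * (√K / L) :=
        sq_le_of_integral_sq_eq_one hab hC1 hnorm (by positivity) hderiv (Ioo_subset_Icc_self hx)
    _ = 1 / L + 2 * (√K / L) := by ring_nf
    _ ≤ ((1 + √K) / √L) ^ 2 := inv_add_two_mul_sqrt_div_le_sq hL hKpos.le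

theorem stmt13 (L C : ℝ) (hL : 0 < L) (hC : 0 < C) (v φ : ℝ → ℝ)
    (hmeas : Measurable v) (hbdd : ∃ B : ℝ, ∀ x, v x ≤ B)
    (hvpos : ∀ x, 0 ≤ v x)
    (hdecay : ∀ᵐ x : ℝ, |v x| ≤ C / x ^ 2)
    (hC1 : ContDiffOn ℝ 1 φ (Set.Icc (-(L/2)) (L/2)))
    (hφpos : ∀ x ∈ Set.Icc (-(L/2)) (L/2), 0 < φ x)
    (hnorm : (∫ x in (-(L/2))..(L/2), φ x ^ 2) = 1)
    (hmin : (∫ x in (-(L/2))..(L/2), ((deriv φ x) ^ 2 + v x * φ x ^ 2)) =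
      sInf {r : ℝ | ∃ u : ℝ → ℝ, ContDiffOn ℝ 1 u (Set.Icc (-(L/2)) (L/2)) ∧
        (∫ x in (-(L/2))..(L/2), u x ^ 2) ≠ 0 ∧
        r = (∫ x in (-(L/2))..(L/2), ((deriv u x) ^ 2 + v x * u x ^ 2)) /
            (∫ x in (-(L/2))..(L/2), u x ^ 2)}) :
    ∀ x ∈ Set.Ioo (-(L/2)) (L/2),
      |φ x| ≤ (1 + Real.sqrt (4 * π ^ 2 + 16 * C)) / Real.sqrt L :=
  stmt13_general L C hL hC v φ hmeas hbdd hvpos hdecay hC1 hnorm hmin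
end
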